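/- LTL(□,◇) and rLTL(□·,◇·) are equally expressive; in particular, for every rLTL(□·,◇·) formula φ over 𝒫 and every j ∈ {1,2,3,4} there exists an LTL(□,◇) formula ψ over 𝒫 such that for every infinite word σ over 2^𝒫 the j-th component of V(σ,φ) equals W(σ,ψ). -/

import Mathlib

/-- Truth values as 4-tuples of Booleans. -/
abbrev TV := Bool × Bool × Bool × Bool

def ttop : TV := (true, true, true, true)
def tbot : TV := (false, false, false, false)

/-- Componentwise order on 4-tuples. -/
def tle (a b : TV) : Prop :=
  a.1 ≤ b.1 ∧ a.2.1 ≤ b.2.1 ∧ a.2.2.1 ≤ b.2.2.1 ∧ a.2.2.2 ≤ b.2.2.2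

instance : DecidableRel tle := fun a b =>
  decidable_of_iff (a.1 ≤ b.1 ∧ a.2.1 ≤ b.2.1 ∧ a.2.2.1 ≤ b.2.2.1 ∧ a.2.2.2 ≤ b.2.2.2) Iff.rfl

def tmeet (a b : TV) : TV :=
  (a.1 && b.1, a.2.1 && b.2.1, a.2.2.1 && b.2.2.1, a.2.2.2 && b.2.2.2)

def tjoin (a b : TV) : TV :=
  (a.1 || b.1, a.2.1 || b.2.1, a.2.2.1 || b.2.2.1, a.2.2.2 || b.2.2.2)

/-- da Costa negation. -/
def tneg (a : TV) : TV := if a = ttop then tbot else ttop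

/-- Residual implication. -/
def timp (a b : TV) : TV := if tle a b then ttop else b

/-- Infimum of a Boolean sequence. -/
noncomputable def bInf (f : ℕ → Bool) : Bool :=
  @decide (∀ i, f i = true) (Classical.propDecidable _)

/-- Supremum of a Boolean sequence. -/
noncomputable def bSup (f : ℕ → Bool) : Bool :=
  @decide (∃ i, f i = true) (Classical.propDecidable _)

/-- Bounded infimum over `i < n`. -/
noncomputable def bInfLt (n : ℕ) (f : ℕ → Bool) : Bool :=
  @decide (∀ i, i < n → f i = true) (Classical.propDecidable _)

/-- Bounded supremum over `i < n`. -/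
noncomputable def bSupLt (n : ℕ) (f : ℕ → Bool) : Bool :=
  @decide (∃ i, i < n ∧ f i = true) (Classical.propDecidable _)

/-- Suffix of an infinite word. -/
def suffix {P : Type} (σ : ℕ → Set P) (i : ℕ) : ℕ → Set P := fun j => σ (i + j)

/-- rLTL(□,◇) formulas. -/
inductive RFormula (P : Type) : Type where
  | atom : P → RFormula P
  | not : RFormula P → RFormula P
  | and : RFormula P → RFormula P → RFormula P
  | or : RFormula P → RFormula P → RFormula P
  | imp : RFormula P → RFormula P → RFormula P
  | always : RFormula P → RFormula P
  | eventually : RFormula P → RFormula P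
  deriving DecidableEq

open scoped Classical in
/-- The 5-valued rLTL semantics. -/
noncomputable def rV {P : Type} : RFormula P → (ℕ → Set P) → TV
  | .atom p, σ => if p ∈ σ 0 then ttop else tbot
  | .not φ, σ => tneg (rV φ σ)
  | .and φ ψ, σ => tmeet (rV φ σ) (rV ψ σ)
  | .or φ ψ, σ => tjoin (rV φ σ) (rV ψ σ)
  | .imp φ ψ, σ => timp (rV φ σ) (rV ψ σ)
  | .always φ, σ =>
      (bInf fun i => (rV φ (suffix σ i)).1,
       bSup fun j => bInf fun i => (rV φ (suffix σ (j + i))).2.1,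
       bInf fun j => bSup fun i => (rV φ (suffix σ (j + i))).2.2.1,
       bSup fun i => (rV φ (suffix σ i)).2.2.2)
  | .eventually φ, σ =>
      (bSup fun i => (rV φ (suffix σ i)).1,
       bSup fun i => (rV φ (suffix σ i)).2.1,
       bSup fun i => (rV φ (suffix σ i)).2.2.1,
       bSup fun i => (rV φ (suffix σ i)).2.2.2)

/-- Projection onto the k-th component. -/
def comp : Fin 4 → TV → Bool
  | 0, a => a.1
  | 1, a => a.2.1
  | 2, a => a.2.2.1
  | 3, a => a.2.2.2

/-- LTL(□,◇) formulas, built from atomic propositions by ¬, ∨, □, ◇. -/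
inductive LFormula (P : Type) : Type where
  | atom : P → LFormula P
  | not : LFormula P → LFormula P
  | or : LFormula P → LFormula P → LFormula P
  | always : LFormula P → LFormula P
  | eventually : LFormula P → LFormula P

/-- Derived conjunction. -/
def LFormula.and {P : Type} (φ ψ : LFormula P) : LFormula P :=
  .not (.or (.not φ) (.not ψ))

/-- Derived implication. -/
def LFormula.imp {P : Type} (φ ψ : LFormula P) : LFormula P :=
  .or (.not φ) ψ

open scoped Classical in
/-- The standard Boolean LTL semantics. -/
noncomputable def lW {P : Type} : LFormula P → (ℕ → Set P) → Bool
  | .atom p, σ => if p ∈ σ 0 then true else false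
  | .not φ, σ => !(lW φ σ)
  | .or φ ψ, σ => lW φ σ || lW ψ σ
  | .always φ, σ => bInf fun i => lW φ (suffix σ i)
  | .eventually φ, σ => bSup fun i => lW φ (suffix σ i)

/-! Every rLTL valuation lies in the chain B₄, and a monotone tuple is `⊤` exactly when its first
component is, so da Costa negation depends only on the first component. With that, each component
of an rLTL formula is expressed in LTL by structural recursion: `a → b` is `⊤` when `a ≤ b` (four
Boolean implications) and `b` otherwise, and the components of `□·φ` are `□`, `◇□`, `□◇` and `◇`
of those of `φ`. The same fact about negation shows that an LTL formula, read as an rLTL formula,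
keeps its truth value in the first component. -/

lemma bInf_eq_true {f : ℕ → Bool} : bInf f = true ↔ ∀ i, f i = true :=
  @decide_eq_true_iff _ (Classical.propDecidable _)

lemma bSup_eq_true {f : ℕ → Bool} : bSup f = true ↔ ∃ i, f i = true :=
  @decide_eq_true_iff _ (Classical.propDecidable _)

lemma suffix_suffix {P : Type} (σ : ℕ → Set P) (j i : ℕ) :
    suffix (suffix σ j) i = suffix σ (j + i) :=
  funext fun k => by simp [suffix, Nat.add_assoc]

/-- The elements of B₄ among all 4-tuples. -/
def tmono (a : TV) : Prop := a.1 ≤ a.2.1 ∧ a.2.1 ≤ a.2.2.1 ∧ a.2.2.1 ≤ a.2.2.2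

instance : DecidablePred tmono := fun a =>
  decidable_of_iff (a.1 ≤ a.2.1 ∧ a.2.1 ≤ a.2.2.1 ∧ a.2.2.1 ≤ a.2.2.2) Iff.rfl

def TV.ofFn (f : Fin 4 → Bool) : TV := (f 0, f 1, f 2, f 3)

@[simp]
lemma comp_ofFn (f : Fin 4 → Bool) (j : Fin 4) : comp j (TV.ofFn f) = f j := by
  fin_cases j <;> rfl

lemma tmono_tneg : ∀ a : TV, tmono (tneg a) := by decide
lemma tmono_tmeet : ∀ a b : TV, tmono a → tmono b → tmono (tmeet a b) := by decide
lemma tmono_tjoin : ∀ a b : TV, tmono a → tmono b → tmono (tjoin a b) := by decide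
lemma tmono_timp : ∀ a b : TV, tmono b → tmono (timp a b) := by decide

lemma tneg_eq_ofFn : ∀ a : TV, tmono a → tneg a = TV.ofFn fun _ => !a.1 := by decide

lemma timp_eq_ofFn : ∀ a b : TV, timp a b = TV.ofFn fun j => (decide (tle a b) || comp j b) := by
  decide

lemma rV_tmono {P : Type} (φ : RFormula P) (σ : ℕ → Set P) : tmono (rV φ σ) := by
  induction φ generalizing σ with
  | atom p => unfold rV; split <;> decide
  | not φ _ => exact tmono_tneg _
  | and φ ψ ihφ ihψ => exact tmono_tmeet _ _ (ihφ σ) (ihψ σ)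
  | or φ ψ ihφ ihψ => exact tmono_tjoin _ _ (ihφ σ) (ihψ σ)
  | imp φ ψ _ ihψ => exact tmono_timp _ _ (ihψ σ)
  | always φ ih =>
      have ih' := fun i => ih (suffix σ i)
      simp only [tmono, Bool.le_iff_imp] at ih'
      simp only [rV, tmono, Bool.le_iff_imp, bInf_eq_true, bSup_eq_true]
      refine ⟨fun h => ⟨0, fun i => (ih' _).1 (h _)⟩, ?_, fun h => ?_⟩
      · -- liminf ≤ limsup: the witness `j₀` of the first works as the index in every tail
        rintro ⟨j₀, h⟩ j
        exact ⟨j₀, Nat.add_comm j j₀ ▸ (ih' _).2.1 (h j)⟩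
      · obtain ⟨i, hi⟩ := h 0
        exact ⟨_, (ih' _).2.2 hi⟩
  | eventually φ ih =>
      have ih' := fun i => ih (suffix σ i)
      simp only [tmono, Bool.le_iff_imp] at ih'
      simp only [rV, tmono, Bool.le_iff_imp, bSup_eq_true]
      exact ⟨fun ⟨i, h⟩ => ⟨i, (ih' i).1 h⟩, fun ⟨i, h⟩ => ⟨i, (ih' i).2.1 h⟩,
        fun ⟨i, h⟩ => ⟨i, (ih' i).2.2 h⟩⟩

def LFormula.compLe {P : Type} (φ ψ : Fin 4 → LFormula P) : LFormula P :=
  ((φ 0).imp (ψ 0)).and (((φ 1).imp (ψ 1)).and (((φ 2).imp (ψ 2)).and ((φ 3).imp (ψ 3))))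

lemma lW_compLe {P : Type} (φ ψ : Fin 4 → LFormula P) (σ : ℕ → Set P) :
    lW (LFormula.compLe φ ψ) σ =
      decide (tle (TV.ofFn fun k => lW (φ k) σ) (TV.ofFn fun k => lW (ψ k) σ)) := by
  simp [LFormula.compLe, LFormula.and, LFormula.imp, lW, TV.ofFn, tle, Bool.le_iff_imp]

def RFormula.toLTL {P : Type} : RFormula P → Fin 4 → LFormula P
  | .atom p, _ => .atom p
  | .not φ, _ => .not (φ.toLTL 0)
  | .and φ ψ, j => .and (φ.toLTL j) (ψ.toLTL j)
  | .or φ ψ, j => .or (φ.toLTL j) (ψ.toLTL j)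
  | .imp φ ψ, j => .or (LFormula.compLe φ.toLTL ψ.toLTL) (ψ.toLTL j)
  | .always φ, 0 => .always (φ.toLTL 0)
  | .always φ, 1 => .eventually (.always (φ.toLTL 1))
  | .always φ, 2 => .always (.eventually (φ.toLTL 2))
  | .always φ, 3 => .eventually (φ.toLTL 3)
  | .eventually φ, j => .eventually (φ.toLTL j)

lemma rV_eq_ofFn_toLTL {P : Type} (φ : RFormula P) (σ : ℕ → Set P) :
    rV φ σ = TV.ofFn fun j => lW (φ.toLTL j) σ := by
  induction φ generalizing σ with
  | atom p => unfold rV; split <;> simp [RFormula.toLTL, lW, TV.ofFn, ttop, tbot, *]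
  | not φ ih =>
      rw [rV, tneg_eq_ofFn _ (rV_tmono φ σ), ih]
      rfl
  | and φ ψ ihφ ihψ =>
      simp [rV, ihφ, ihψ, RFormula.toLTL, LFormula.and, lW, tmeet, TV.ofFn]
  | or φ ψ ihφ ihψ => simp [rV, ihφ, ihψ, RFormula.toLTL, lW, tjoin, TV.ofFn]
  | imp φ ψ ihφ ihψ =>
      simp only [rV, timp_eq_ofFn, ihφ, ihψ, RFormula.toLTL, lW, lW_compLe, comp_ofFn]
  | always φ ih => simp [rV, ih, RFormula.toLTL, lW, TV.ofFn, suffix_suffix]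
  | eventually φ ih => simp [rV, ih, RFormula.toLTL, lW, TV.ofFn]

def LFormula.toRLTL {P : Type} : LFormula P → RFormula P
  | .atom p => .atom p
  | .not φ => .not φ.toRLTL
  | .or φ ψ => .or φ.toRLTL ψ.toRLTL
  | .always φ => .always φ.toRLTL
  | .eventually φ => .eventually φ.toRLTL

lemma lW_eq_rV_toRLTL {P : Type} (ψ : LFormula P) (σ : ℕ → Set P) :
    lW ψ σ = (rV ψ.toRLTL σ).1 := by
  induction ψ generalizing σ with
  | atom p => simp only [lW, LFormula.toRLTL, rV]; split <;> rfl
  | not φ ih => rw [lW, LFormula.toRLTL, rV, tneg_eq_ofFn _ (rV_tmono _ σ), ih]; rfl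
  | or φ ψ ihφ ihψ => rw [lW, LFormula.toRLTL, rV, ihφ, ihψ]; rfl
  | always φ ih => simp only [lW, LFormula.toRLTL, rV, ih]
  | eventually φ ih => simp only [lW, LFormula.toRLTL, rV, ih]

/-- LTL(□,◇) and rLTL(□,◇) are equally expressive: every component of the
rLTL semantics of an rLTL(□,◇) formula is the LTL semantics of some LTL(□,◇) formula, and
conversely the LTL semantics of every LTL(□,◇) formula is the first component of the rLTL
semantics of some rLTL(□,◇) formula. -/
theorem rLTL_LTL_equally_expressive {P : Type} :
    (∀ (φ : RFormula P) (j : Fin 4), ∃ ψ : LFormula P,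
      ∀ σ : ℕ → Set P, comp j (rV φ σ) = lW ψ σ)
    ∧ (∀ ψ : LFormula P, ∃ φ : RFormula P,
      ∀ σ : ℕ → Set P, lW ψ σ = (rV φ σ).1) :=
  ⟨fun φ j => ⟨φ.toLTL j, fun σ => by rw [rV_eq_ofFn_toLTL, comp_ofFn]⟩,
    fun ψ => ⟨ψ.toRLTL, lW_eq_rV_toRLTL ψ⟩⟩
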